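/- Let P = {(x,y)} be a finite collection of vectors with x ∈ ℂ^{d₁}, y ∈ ℂ^{d₂}, such that ∑_{(x,y)∈P} (x,y)(x,y)† = I_{d₁+d₂}. Let A be a d₁×d₁ positive definite diagonal matrix with smallest eigenvalue a > 0 and B a d₂×d₂ positive definite diagonal matrix with smallest eigenvalue b > 0. Then for any coefficients c_{x,y} ∈ [−1,1], ‖∑_{(x,y)∈P} c_{x,y}·x·‖x‖·‖y‖² / (x†Ax + y†By)‖ ≤ √(d₁)/b. -/

import Mathlib

/-!
Stack the vectors `x i` as the columns of a matrix `S`. The `(1,1)` block of the resolution of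
the identity says `S Sᴴ = 1`, so `S` has `ℓ²` operator norm at most `1` and the vector in
question, `S w` for the coefficient vector `w`, has norm at most `‖w‖`. Since
`y†By ≥ b‖y‖²`, each coefficient satisfies `|w i| ≤ ‖x i‖ / b`, and
`∑ i, ‖x i‖² = tr (S Sᴴ) = d₁`.
-/

open Matrix

/-- The quadratic form `∑ j, A j * ‖v j‖²` of a positive diagonal matrix with diagonal
entries `A` at the vector `v`. -/
noncomputable def quadForm {d : ℕ} (A : Fin d → ℝ) (v : Fin d → ℂ) : ℝ :=
  ∑ j, A j * ‖v j‖ ^ 2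

open scoped Matrix.Norms.L2Operator

namespace Matrix

variable {𝕜 m n : Type*} [RCLike 𝕜] [Fintype m] [Fintype n] [DecidableEq m]

theorem sum_sum_norm_sq_eq_card_of_mul_conjTranspose_eq_one {M : Matrix m n 𝕜}
    (h : M * Mᴴ = 1) : ∑ i, ∑ j, ‖M i j‖ ^ 2 = Fintype.card m := by
  have htr := congrArg trace h
  simp only [trace, diag_apply, mul_apply, conjTranspose_apply, RCLike.star_def, RCLike.mul_conj,
    one_apply_eq, Finset.sum_const, Finset.card_univ, nsmul_eq_mul, mul_one] at htr
  exact_mod_cast htr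

theorem sum_sq_le_card_div_sq_of_abs_le {ι : Type*} [Fintype ι] {M : Matrix m ι 𝕜}
    (h : M * Mᴴ = 1) {w : ι → ℝ} {b : ℝ} (hw : ∀ i, |w i| ≤ √(∑ j, ‖M j i‖ ^ 2) / b) :
    ∑ i, w i ^ 2 ≤ Fintype.card m / b ^ 2 :=
  calc ∑ i, w i ^ 2 ≤ ∑ i, (∑ j, ‖M j i‖ ^ 2) / b ^ 2 := by
        refine Finset.sum_le_sum fun i _ => ?_
        have hcol : (0 : ℝ) ≤ ∑ j, ‖M j i‖ ^ 2 := by positivity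
        rw [← sq_abs, ← Real.sq_sqrt hcol, ← div_pow]
        exact pow_le_pow_left₀ (abs_nonneg _) (hw i) 2
    _ = Fintype.card m / b ^ 2 := by
        rw [← Finset.sum_div, Finset.sum_comm,
          sum_sum_norm_sq_eq_card_of_mul_conjTranspose_eq_one h]

theorem l2_opNorm_le_one_of_mul_conjTranspose_eq_one [DecidableEq n] {M : Matrix m n 𝕜}
    (h : M * Mᴴ = 1) : ‖M‖ ≤ 1 := by
  have hsq : ‖M‖ * ‖M‖ ≤ 1 := by
    rw [← l2_opNorm_conjTranspose, ← l2_opNorm_conjTranspose_mul_self,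
      conjTranspose_conjTranspose, h]
    exact (l2_opNorm_diagonal (1 : m → 𝕜)).le.trans
      ((pi_norm_le_iff_of_nonneg zero_le_one).2 fun _ => by simp)
  nlinarith [norm_nonneg M]

end Matrix

theorem mul_conjTranspose_eq_one_of_sum_vecMulVec_sumElim {𝕜 m n ι : Type*} [RCLike 𝕜]
    [Fintype ι] [DecidableEq m] [DecidableEq n] {x : ι → m → 𝕜} {y : ι → n → 𝕜}
    (h : ∑ i, vecMulVec (Sum.elim (x i) (y i)) (star (Sum.elim (x i) (y i))) = 1) :
    of (fun j i => x i j) * (of fun j i => x i j)ᴴ = 1 := by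
  ext j k
  simpa [mul_apply, Matrix.sum_apply, vecMulVec_apply, one_apply] using
    congrFun (congrFun h (.inl j)) (.inl k)

theorem quadForm_nonneg {d : ℕ} {A : Fin d → ℝ} (hA : ∀ j, 0 ≤ A j) (v : Fin d → ℂ) :
    0 ≤ quadForm A v :=
  Finset.sum_nonneg fun j _ => mul_nonneg (hA j) (sq_nonneg _)

theorem mul_sum_norm_sq_le_quadForm {d : ℕ} {B : Fin d → ℝ} {b : ℝ} (hB : ∀ k, b ≤ B k)
    (v : Fin d → ℂ) : b * ∑ k, ‖v k‖ ^ 2 ≤ quadForm B v := by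
  rw [Finset.mul_sum]
  exact Finset.sum_le_sum fun k _ => mul_le_mul_of_nonneg_right (hB k) (sq_nonneg _)

theorem abs_mul_mul_div_add_le {b c s t p q : ℝ} (hb : 0 < b) (hc : |c| ≤ 1) (hs : 0 ≤ s)
    (ht : 0 ≤ t) (hp : 0 ≤ p) (hq : b * t ≤ q) : |c * s * t / (p + q)| ≤ s / b := by
  rcases ht.eq_or_lt with rfl | ht
  · simp only [mul_zero, zero_div, abs_zero]
    positivity
  have hpq : 0 < p + q := by nlinarith
  rw [abs_div, abs_of_pos hpq, abs_mul, abs_mul, abs_of_nonneg hs, abs_of_pos ht,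
    div_le_div_iff₀ hpq hb]
  nlinarith [mul_nonneg hs ht.le, mul_nonneg (mul_nonneg hs ht.le) (sub_nonneg.2 hc)]

/-- Let `{(x i, y i)}` with `x i ∈ ℂ^{d₁}`, `y i ∈ ℂ^{d₂}` be a finite
collection whose concatenations form a resolution of the identity on `ℂ^{d₁+d₂}`. Let `A`,
`B` be positive definite diagonal matrices with smallest eigenvalues `a, b > 0`. Then for
any coefficients `c i ∈ [-1, 1]`,
`‖∑ i, c i • (x i) ‖x i‖ ‖y i‖² / ((x i)†A(x i) + (y i)†B(y i))‖ ≤ √d₁ / b`. -/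
theorem stmt7 {d₁ d₂ : ℕ} {ι : Type*} [Fintype ι]
    (x : ι → Fin d₁ → ℂ) (y : ι → Fin d₂ → ℂ)
    (hres : ∑ i, Matrix.vecMulVec (Sum.elim (x i) (y i)) (star (Sum.elim (x i) (y i)))
      = (1 : Matrix (Fin d₁ ⊕ Fin d₂) (Fin d₁ ⊕ Fin d₂) ℂ))
    (A : Fin d₁ → ℝ) (B : Fin d₂ → ℝ) (a b : ℝ) (ha : 0 < a) (hb : 0 < b)
    (hA : ∀ j, a ≤ A j) (hB : ∀ k, b ≤ B k)
    (c : ι → ℝ) (hc : ∀ i, |c i| ≤ 1) :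
    Real.sqrt (∑ j, ‖∑ i,
        (c i * Real.sqrt (∑ j', ‖x i j'‖ ^ 2) * (∑ k, ‖y i k‖ ^ 2)
          / (quadForm A (x i) + quadForm B (y i))) • x i j‖ ^ 2)
      ≤ Real.sqrt d₁ / b := by
  classical
  set w : ι → ℝ := fun i =>
    c i * Real.sqrt (∑ j', ‖x i j'‖ ^ 2) * (∑ k, ‖y i k‖ ^ 2)
      / (quadForm A (x i) + quadForm B (y i))
  set S : Matrix (Fin d₁) ι ℂ := of fun j i => x i j
  have hS : S * Sᴴ = 1 := mul_conjTranspose_eq_one_of_sum_vecMulVec_sumElim hres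
  have hw (i : ι) : |w i| ≤ Real.sqrt (∑ j, ‖x i j‖ ^ 2) / b :=
    abs_mul_mul_div_add_le hb (hc i) (Real.sqrt_nonneg _) (by positivity)
      (quadForm_nonneg (fun j => ha.le.trans (hA j)) _) (mul_sum_norm_sq_le_quadForm hB _)
  have hsum : ∑ i, ‖(w i : ℂ)‖ ^ 2 ≤ d₁ / b ^ 2 := by
    simpa only [Complex.norm_real, Real.norm_eq_abs, sq_abs, Fintype.card_fin] using
      sum_sq_le_card_div_sq_of_abs_le hS hw
  calc Real.sqrt (∑ j, ‖∑ i, w i • x i j‖ ^ 2)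
      = ‖(EuclideanSpace.equiv (Fin d₁) ℂ).symm (S *ᵥ WithLp.toLp 2 fun i => (w i : ℂ))‖ := by
        simp [EuclideanSpace.norm_eq, S, mulVec, dotProduct, Complex.real_smul, mul_comm]
    _ ≤ ‖S‖ * ‖WithLp.toLp 2 fun i => (w i : ℂ)‖ := l2_opNorm_mulVec S _
    _ ≤ ‖WithLp.toLp 2 fun i => (w i : ℂ)‖ :=
        mul_le_of_le_one_left (norm_nonneg _) (l2_opNorm_le_one_of_mul_conjTranspose_eq_one hS)
    _ ≤ Real.sqrt (d₁ / b ^ 2) := by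
        rw [EuclideanSpace.norm_eq]
        exact Real.sqrt_le_sqrt hsum
    _ = Real.sqrt d₁ / b := by rw [Real.sqrt_div (Nat.cast_nonneg _), Real.sqrt_sq hb.le]
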